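/- Assume γ₂ > 0 and γ₁ ≠ γ₂. Define p(t) := B(t) − A(t)²/3, q(t) := 2A(t)³/27 − A(t)B(t)/3 + C(t), and the cubic discriminant Δ(t) := (p(t)/3)³ + (q(t)/2)². Then t·Δ(t) → −g·(γ₂d₂)⁴/27 as t → ∞; in particular there exists t₀ > 0 such that Δ(t) < 0 for all t ≥ t₀, and consequently for each t ≥ t₀ the cubic φ(t,·) has three distinct real roots. -/

import Mathlib

open Real Filter Asymptotics
open Topology

/-!
Write `m = γ₂ d₂`. For `x, y ≥ 0` the ratios `sinh x cosh y / cosh (x + y)` and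
`sinh x sinh y / sinh (x + y)` lie in `[0, 1]`, so `A(t) → -m`, `t B(t) → γ₂² d₂ - g` and
`t C(t) → g m`. Up to the factor `-1/108`, `Δ` is the classical discriminant
`A²B² - 4B³ - 4A³C - 27C² + 18ABC` of `φ(t, ·)`; after multiplication by `t` every term but
`-4A³ · tC` keeps a factor `1/t`, whence `t Δ(t) → (-m)³ g m / 27 = -g m⁴ / 27`.
Once `Δ < 0`, the depressed cubic is positive at `-√(-p/3)` and negative at `√(-p/3)`, and the
intermediate value theorem gives three real roots.
-/

/-- The coefficient `A(t)` of the dispersion cubic. -/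
noncomputable def funA (d₁ d₂ γ₁ γ₂ t : ℝ) : ℝ :=
  -(1 / t) * (γ₂ * (t * d₂ + Real.sinh (t * d₂) * Real.cosh (t * d₁) / Real.cosh (t * (d₁ + d₂)))
    + γ₁ * Real.sinh (t * d₁) * Real.cosh (t * d₂) / Real.cosh (t * (d₁ + d₂)))

/-- The coefficient `B(t)` of the dispersion cubic. -/
noncomputable def funB (d₁ d₂ g γ₁ γ₂ t : ℝ) : ℝ :=
  Real.tanh (t * (d₁ + d₂)) * ((γ₂ ^ 2 * d₂ - g) / t
    + γ₂ * (γ₁ - γ₂) * Real.sinh (t * d₁) * Real.sinh (t * d₂) /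
        (t ^ 2 * Real.sinh (t * (d₁ + d₂))))

/-- The coefficient `C(t)` of the dispersion cubic. -/
noncomputable def funC (d₁ d₂ g γ₁ γ₂ t : ℝ) : ℝ :=
  (g * Real.tanh (t * (d₁ + d₂)) / t ^ 2) *
    ((γ₁ - γ₂) * Real.sinh (t * d₁) * Real.sinh (t * d₂) / Real.sinh (t * (d₁ + d₂))
      + γ₂ * d₂ * t)

/-- The dispersion cubic `φ(t,Λ)`. -/
noncomputable def phi (d₁ d₂ g γ₁ γ₂ t Λ : ℝ) : ℝ :=
  Λ ^ 3 + funA d₁ d₂ γ₁ γ₂ t * Λ ^ 2 + funB d₁ d₂ g γ₁ γ₂ t * Λ + funC d₁ d₂ g γ₁ γ₂ t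

/-- The coefficient `p(t)` of the depressed cubic. -/
noncomputable def funp (d₁ d₂ g γ₁ γ₂ t : ℝ) : ℝ :=
  funB d₁ d₂ g γ₁ γ₂ t - (funA d₁ d₂ γ₁ γ₂ t) ^ 2 / 3

/-- The coefficient `q(t)` of the depressed cubic. -/
noncomputable def funq (d₁ d₂ g γ₁ γ₂ t : ℝ) : ℝ :=
  2 * (funA d₁ d₂ γ₁ γ₂ t) ^ 3 / 27 - funA d₁ d₂ γ₁ γ₂ t * funB d₁ d₂ g γ₁ γ₂ t / 3
    + funC d₁ d₂ g γ₁ γ₂ t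

/-- The discriminant `Δ(t)` of the depressed cubic. -/
noncomputable def disc (d₁ d₂ g γ₁ γ₂ t : ℝ) : ℝ :=
  (funp d₁ d₂ g γ₁ γ₂ t / 3) ^ 3 + (funq d₁ d₂ g γ₁ γ₂ t / 2) ^ 2

lemma abs_sinh_mul_cosh_div_cosh_add_le_one {x y : ℝ} (hx : 0 ≤ x) (hy : 0 ≤ y) :
    |sinh x * cosh y / cosh (x + y)| ≤ 1 := by
  have hsx : 0 ≤ sinh x := sinh_nonneg_iff.2 hx
  have hsy : 0 ≤ sinh y := sinh_nonneg_iff.2 hy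
  rw [abs_of_nonneg (div_nonneg (mul_nonneg hsx (cosh_pos y).le) (cosh_pos _).le),
    div_le_one (cosh_pos _), cosh_add]
  have := mul_le_mul_of_nonneg_right (sinh_lt_cosh x).le (cosh_pos y).le
  nlinarith [mul_nonneg hsx hsy]

lemma abs_sinh_mul_sinh_div_sinh_add_le_one {x y : ℝ} (hx : 0 ≤ x) (hy : 0 ≤ y) :
    |sinh x * sinh y / sinh (x + y)| ≤ 1 := by
  have hsx : 0 ≤ sinh x := sinh_nonneg_iff.2 hx
  have hsy : 0 ≤ sinh y := sinh_nonneg_iff.2 hy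
  rw [abs_of_nonneg (div_nonneg (mul_nonneg hsx hsy) (sinh_nonneg_iff.2 (add_nonneg hx hy)))]
  refine div_le_one_of_le₀ ?_ (sinh_nonneg_iff.2 (add_nonneg hx hy))
  rw [sinh_add]
  have := mul_le_mul_of_nonneg_right (sinh_lt_cosh x).le hsy
  nlinarith [mul_nonneg hsx (cosh_pos y).le]

lemma tanh_eq_one_sub (x : ℝ) : tanh x = 1 - 2 * (exp (2 * x) + 1)⁻¹ := by
  rw [tanh_eq, exp_neg, show 2 * x = x + x by ring, exp_add]
  field_simp
  ring

lemma tendsto_tanh_atTop : Tendsto tanh atTop (𝓝 1) := by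
  have h : Tendsto (fun x => exp (2 * x) + 1) atTop atTop :=
    tendsto_atTop_add_const_right _ 1
      (tendsto_exp_atTop.comp (tendsto_id.const_mul_atTop two_pos))
  simpa [← tanh_eq_one_sub] using
    ((tendsto_inv_atTop_zero.comp h).const_mul 2).const_sub 1

lemma tendsto_inv_mul_of_abs_le {f : ℝ → ℝ} {K : ℝ} (h : ∀ᶠ t in atTop, |f t| ≤ K) :
    Tendsto (fun t => t⁻¹ * f t) atTop (𝓝 0) :=
  tendsto_inv_atTop_zero.zero_mul_isBoundedUnder_le (isBoundedUnder_of_eventually_le h)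

lemma tendsto_tanh_mul_atTop {d : ℝ} (hd : 0 < d) :
    Tendsto (fun t => tanh (t * d)) atTop (𝓝 1) :=
  tendsto_tanh_atTop.comp (tendsto_id.atTop_mul_const hd)

lemma depressed_disc_eq_neg_discr_div (a b c : ℝ) :
    ((b - a ^ 2 / 3) / 3) ^ 3 + ((2 * a ^ 3 / 27 - a * b / 3 + c) / 2) ^ 2
      = -(Cubic.discr ⟨1, a, b, c⟩) / 108 := by
  simp only [Cubic.discr]
  ring

lemma tendsto_mul_discr {A B C : ℝ → ℝ} {a b c : ℝ} (hA : Tendsto A atTop (𝓝 a))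
    (hB : Tendsto (fun t => t * B t) atTop (𝓝 b)) (hC : Tendsto (fun t => t * C t) atTop (𝓝 c)) :
    Tendsto (fun t => t * Cubic.discr ⟨1, A t, B t, C t⟩) atTop (𝓝 (-4 * a ^ 3 * c)) := by
  have hinv := tendsto_inv_atTop_zero (𝕜 := ℝ)
  have hlim := ((hinv.mul ((hA.pow 2).mul (hB.pow 2) |>.sub ((hC.pow 2).const_mul 27)
    |>.add (((hA.mul hB).mul hC).const_mul 18))).sub
    (((hinv.pow 2).mul (hB.pow 3)).const_mul 4)).sub (((hA.pow 3).mul hC).const_mul 4)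
  have heq : (fun t => t⁻¹ * (A t ^ 2 * (t * B t) ^ 2 - 27 * (t * C t) ^ 2
      + 18 * (A t * (t * B t) * (t * C t))) - 4 * ((t⁻¹) ^ 2 * (t * B t) ^ 3)
      - 4 * (A t ^ 3 * (t * C t))) =ᶠ[atTop] fun t => t * Cubic.discr ⟨1, A t, B t, C t⟩ := by
    filter_upwards [eventually_ne_atTop 0] with t ht
    simp only [Cubic.discr]
    field_simp
    ring
  convert hlim.congr' heq using 2
  ring

section Coefficients

variable {d₁ d₂ : ℝ} (g γ₁ γ₂ : ℝ)

lemma tendsto_inv_mul_sinh_ratio (c : ℝ) (hd₁ : 0 ≤ d₁) (hd₂ : 0 ≤ d₂) :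
    Tendsto (fun t => t⁻¹ * (c * (sinh (t * d₁) * sinh (t * d₂) / sinh (t * d₁ + t * d₂))))
      atTop (𝓝 0) := by
  refine tendsto_inv_mul_of_abs_le (K := |c|) ?_
  filter_upwards [eventually_ge_atTop 0] with t ht
  rw [abs_mul]
  exact mul_le_of_le_one_right (abs_nonneg c)
    (abs_sinh_mul_sinh_div_sinh_add_le_one (mul_nonneg ht hd₁) (mul_nonneg ht hd₂))

lemma funA_eq {t : ℝ} (ht : t ≠ 0) :
    funA d₁ d₂ γ₁ γ₂ t = -(γ₂ * d₂) - t⁻¹ *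
      (γ₂ * (sinh (t * d₂) * cosh (t * d₁) / cosh (t * d₂ + t * d₁))
        + γ₁ * (sinh (t * d₁) * cosh (t * d₂) / cosh (t * d₁ + t * d₂))) := by
  rw [funA, ← mul_add, ← mul_add, add_comm d₂ d₁]
  field_simp
  ring

lemma tendsto_funA (hd₁ : 0 ≤ d₁) (hd₂ : 0 ≤ d₂) :
    Tendsto (funA d₁ d₂ γ₁ γ₂) atTop (𝓝 (-(γ₂ * d₂))) := by
  have hrest := tendsto_inv_mul_of_abs_le (K := |γ₂| + |γ₁|) (f := fun t =>
      γ₂ * (sinh (t * d₂) * cosh (t * d₁) / cosh (t * d₂ + t * d₁))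
        + γ₁ * (sinh (t * d₁) * cosh (t * d₂) / cosh (t * d₁ + t * d₂))) <| by
    filter_upwards [eventually_ge_atTop 0] with t ht
    have h₁ := abs_sinh_mul_cosh_div_cosh_add_le_one (mul_nonneg ht hd₂) (mul_nonneg ht hd₁)
    have h₂ := abs_sinh_mul_cosh_div_cosh_add_le_one (mul_nonneg ht hd₁) (mul_nonneg ht hd₂)
    refine (abs_add_le _ _).trans ?_
    rw [abs_mul, abs_mul]
    exact add_le_add (mul_le_of_le_one_right (abs_nonneg _) h₁)
      (mul_le_of_le_one_right (abs_nonneg _) h₂)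
  have h := (tendsto_const_nhds (x := -(γ₂ * d₂))).sub hrest
  rw [sub_zero] at h
  refine h.congr' ?_
  filter_upwards [eventually_ne_atTop 0] with t ht
  exact (funA_eq γ₁ γ₂ ht).symm

lemma mul_funB_eq {t : ℝ} (ht : t ≠ 0) :
    t * funB d₁ d₂ g γ₁ γ₂ t = tanh (t * (d₁ + d₂)) * (γ₂ ^ 2 * d₂ - g + t⁻¹ *
      (γ₂ * (γ₁ - γ₂) * (sinh (t * d₁) * sinh (t * d₂) / sinh (t * d₁ + t * d₂)))) := by
  rw [funB, ← mul_add t d₁ d₂]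
  field_simp

lemma tendsto_mul_funB (hd₁ : 0 ≤ d₁) (hd₂ : 0 ≤ d₂) (hd : 0 < d₁ + d₂) :
    Tendsto (fun t => t * funB d₁ d₂ g γ₁ γ₂ t) atTop (𝓝 (γ₂ ^ 2 * d₂ - g)) := by
  have h := (tendsto_tanh_mul_atTop hd).mul
    ((tendsto_const_nhds (x := γ₂ ^ 2 * d₂ - g)).add
      (tendsto_inv_mul_sinh_ratio (γ₂ * (γ₁ - γ₂)) hd₁ hd₂))
  rw [one_mul, add_zero] at h
  refine h.congr' ?_
  filter_upwards [eventually_ne_atTop 0] with t ht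
  exact (mul_funB_eq g γ₁ γ₂ ht).symm

lemma mul_funC_eq {t : ℝ} (ht : t ≠ 0) :
    t * funC d₁ d₂ g γ₁ γ₂ t = g * tanh (t * (d₁ + d₂)) * (γ₂ * d₂ + t⁻¹ *
      ((γ₁ - γ₂) * (sinh (t * d₁) * sinh (t * d₂) / sinh (t * d₁ + t * d₂)))) := by
  rw [funC, ← mul_add t d₁ d₂]
  field_simp
  ring

lemma tendsto_mul_funC (hd₁ : 0 ≤ d₁) (hd₂ : 0 ≤ d₂) (hd : 0 < d₁ + d₂) :
    Tendsto (fun t => t * funC d₁ d₂ g γ₁ γ₂ t) atTop (𝓝 (g * (γ₂ * d₂))) := by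
  have h := ((tendsto_tanh_mul_atTop hd).const_mul g).mul
    ((tendsto_const_nhds (x := γ₂ * d₂)).add (tendsto_inv_mul_sinh_ratio (γ₁ - γ₂) hd₁ hd₂))
  rw [mul_one, add_zero] at h
  refine h.congr' ?_
  filter_upwards [eventually_ne_atTop 0] with t ht
  exact (mul_funC_eq g γ₁ γ₂ ht).symm

end Coefficients

section DepressedCubic

variable {p q : ℝ}

lemma depressed_cubic_eq_prod_of_roots {x y z : ℝ} (hxy : x ≠ y) (hxz : x ≠ z) (hyz : y ≠ z)
    (hx : x ^ 3 + p * x + q = 0) (hy : y ^ 3 + p * y + q = 0) (hz : z ^ 3 + p * z + q = 0)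
    (w : ℝ) : w ^ 3 + p * w + q = (w - x) * (w - y) * (w - z) := by
  have hxy' : x ^ 2 + x * y + y ^ 2 + p = 0 :=
    (mul_eq_zero.1 (by linear_combination hx - hy :
      (x - y) * (x ^ 2 + x * y + y ^ 2 + p) = 0)).resolve_left (sub_ne_zero.2 hxy)
  have hxz' : x ^ 2 + x * z + z ^ 2 + p = 0 :=
    (mul_eq_zero.1 (by linear_combination hx - hz :
      (x - z) * (x ^ 2 + x * z + z ^ 2 + p) = 0)).resolve_left (sub_ne_zero.2 hxz)
  have hsum : x + y + z = 0 :=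
    (mul_eq_zero.1 (by linear_combination hxy' - hxz' :
      (y - z) * (x + y + z) = 0)).resolve_left (sub_ne_zero.2 hyz)
  have hp : p = x * y + y * z + z * x := by linear_combination hxy' - (x + y) * hsum
  have hq : q = -(x * y * z) := by linear_combination hx - x * hp - x ^ 2 * hsum
  linear_combination w ^ 2 * hsum + w * hp + hq

lemma depressed_cubic_pos_of_le {T : ℝ} (hT : 1 + |p| + |q| ≤ T) : 0 < T ^ 3 + p * T + q := by
  have hT1 : 1 ≤ T := by linarith [abs_nonneg p, abs_nonneg q]
  have hT2 : 1 + |p| + |q| ≤ T ^ 2 := by nlinarith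
  have hT3 : T * (1 + |p| + |q|) ≤ T ^ 3 := by nlinarith
  have hpT : -(|p| * T) ≤ p * T := by nlinarith [neg_abs_le p]
  have hqT : |q| ≤ |q| * T := le_mul_of_one_le_right (abs_nonneg q) hT1
  nlinarith [neg_abs_le q]

lemma exists_three_roots_of_disc_neg (h : (p / 3) ^ 3 + (q / 2) ^ 2 < 0) :
    ∃ x y z : ℝ, x < y ∧ y < z ∧ ∀ w, w ^ 3 + p * w + q = (w - x) * (w - y) * (w - z) := by
  set f : ℝ → ℝ := fun w => w ^ 3 + p * w + q with hf
  have hcont : Continuous f := by fun_prop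
  have hp : p < 0 := by
    by_contra! hp
    linarith [pow_nonneg (div_nonneg hp zero_le_three) 3, sq_nonneg (q / 2)]
  obtain ⟨s, hs, hs2⟩ : ∃ s, 0 < s ∧ s ^ 2 = -p / 3 :=
    ⟨√(-p / 3), sqrt_pos.2 (by linarith), sq_sqrt (by linarith)⟩
  have hf_s : f s = q + 2 * p * s / 3 := by linear_combination s * hs2
  have hf_neg_s : f (-s) = q - 2 * p * s / 3 := by linear_combination -s * hs2
  have hprod : f (-s) * f s = 4 * ((p / 3) ^ 3 + (q / 2) ^ 2) := by
    rw [hf_s, hf_neg_s]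
    linear_combination -(4 * p ^ 2 / 9) * hs2
  have hfs : f s < 0 ∧ 0 < f (-s) := by
    have hlt : f s < f (-s) := by
      rw [hf_s, hf_neg_s]
      nlinarith [mul_pos (neg_pos.2 hp) hs]
    constructor <;> nlinarith
  set T := 1 + |p| + |q| + s
  have hsT : s < T := by linarith [abs_nonneg p, abs_nonneg q]
  have hfT : 0 < f T := depressed_cubic_pos_of_le (by linarith)
  have hfT' : f (-T) < 0 := by
    have := depressed_cubic_pos_of_le (p := p) (q := -q) (T := T) (by rw [abs_neg]; linarith)
    simp only [hf]; linarith
  obtain ⟨x, hx, hfx⟩ := intermediate_value_Ioo (by linarith) hcont.continuousOn ⟨hfT', hfs.2⟩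
  obtain ⟨y, hy, hfy⟩ := intermediate_value_Ioo' (by linarith) hcont.continuousOn hfs
  obtain ⟨z, hz, hfz⟩ := intermediate_value_Ioo hsT.le hcont.continuousOn ⟨hfs.1, hfT⟩
  have hxy : x < y := hx.2.trans hy.1
  have hyz : y < z := hy.2.trans hz.1
  exact ⟨x, y, z, hxy, hyz, depressed_cubic_eq_prod_of_roots hxy.ne (hxy.trans hyz).ne hyz.ne
    hfx hfy hfz⟩

end DepressedCubic

section Dispersion

variable (d₁ d₂ g γ₁ γ₂ : ℝ)

lemma disc_eq_neg_discr_div (t : ℝ) :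
    disc d₁ d₂ g γ₁ γ₂ t
      = -(Cubic.discr ⟨1, funA d₁ d₂ γ₁ γ₂ t, funB d₁ d₂ g γ₁ γ₂ t, funC d₁ d₂ g γ₁ γ₂ t⟩) / 108 :=
  depressed_disc_eq_neg_discr_div _ _ _

lemma phi_eq_depressed (t Λ : ℝ) :
    phi d₁ d₂ g γ₁ γ₂ t Λ = (Λ + funA d₁ d₂ γ₁ γ₂ t / 3) ^ 3
      + funp d₁ d₂ g γ₁ γ₂ t * (Λ + funA d₁ d₂ γ₁ γ₂ t / 3) + funq d₁ d₂ g γ₁ γ₂ t := by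
  simp only [phi, funp, funq]
  ring

end Dispersion

theorem discriminant_negative_three_roots_general
    (d₁ d₂ g γ₁ γ₂ : ℝ) (hd₁ : 0 < d₁) (hd₂ : 0 < d₂) (hg : 0 < g)
    (hγ₂ : 0 < γ₂) :
    Tendsto (fun t : ℝ => t * disc d₁ d₂ g γ₁ γ₂ t) atTop
      (nhds (-(g * (γ₂ * d₂) ^ 4) / 27)) ∧
    ∃ t₀ > (0 : ℝ), ∀ t ≥ t₀,
      disc d₁ d₂ g γ₁ γ₂ t < 0 ∧
      ∃ x y z : ℝ, x < y ∧ y < z ∧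
        ∀ Λ : ℝ, phi d₁ d₂ g γ₁ γ₂ t Λ = (Λ - x) * (Λ - y) * (Λ - z) := by
  have hd : 0 < d₁ + d₂ := add_pos hd₁ hd₂
  have hlim : Tendsto (fun t : ℝ => t * disc d₁ d₂ g γ₁ γ₂ t) atTop
      (nhds (-(g * (γ₂ * d₂) ^ 4) / 27)) := by
    have h := (tendsto_mul_discr (tendsto_funA γ₁ γ₂ hd₁.le hd₂.le)
      (tendsto_mul_funB g γ₁ γ₂ hd₁.le hd₂.le hd)
      (tendsto_mul_funC g γ₁ γ₂ hd₁.le hd₂.le hd)).neg.div_const 108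
    simp_rw [disc_eq_neg_discr_div, mul_div_assoc', mul_neg]
    convert h using 2
    ring
  have hL : -(g * (γ₂ * d₂) ^ 4) / 27 < 0 := by
    have : 0 < g * (γ₂ * d₂) ^ 4 := by positivity
    linarith
  have hneg : ∀ᶠ t in atTop, disc d₁ d₂ g γ₁ γ₂ t < 0 := by
    filter_upwards [hlim.eventually_lt_const hL, eventually_gt_atTop 0] with t ht ht₀
    exact neg_of_mul_neg_right ht ht₀.le
  obtain ⟨t₀, ht₀⟩ := eventually_atTop.1 hneg
  refine ⟨hlim, max t₀ 1, by positivity, fun t ht => ?_⟩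
  have hΔ := ht₀ t (le_of_max_le_left ht)
  obtain ⟨x, y, z, hxy, hyz, hfac⟩ := exists_three_roots_of_disc_neg hΔ
  refine ⟨hΔ, ?_⟩
  refine ⟨x - funA d₁ d₂ γ₁ γ₂ t / 3, y - funA d₁ d₂ γ₁ γ₂ t / 3, z - funA d₁ d₂ γ₁ γ₂ t / 3,
    by linarith, by linarith, fun Λ => ?_⟩
  rw [phi_eq_depressed, hfac]
  ring

/-- for `γ₂ > 0`, `γ₁ ≠ γ₂`, the discriminant satisfies
`t·Δ(t) → −g(γ₂d₂)⁴/27`; in particular it is eventually negative and the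
dispersion cubic has three distinct real roots. -/
theorem discriminant_negative_three_roots
    (d₁ d₂ g γ₁ γ₂ : ℝ) (hd₁ : 0 < d₁) (hd₂ : 0 < d₂) (hg : 0 < g)
    (hγ₂ : 0 < γ₂) (hne : γ₁ ≠ γ₂) :
    Tendsto (fun t : ℝ => t * disc d₁ d₂ g γ₁ γ₂ t) atTop
      (nhds (-(g * (γ₂ * d₂) ^ 4) / 27)) ∧
    ∃ t₀ > (0 : ℝ), ∀ t ≥ t₀,
      disc d₁ d₂ g γ₁ γ₂ t < 0 ∧
      ∃ x y z : ℝ, x < y ∧ y < z ∧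
        ∀ Λ : ℝ, phi d₁ d₂ g γ₁ γ₂ t Λ = (Λ - x) * (Λ - y) * (Λ - z) :=
  discriminant_negative_three_roots_general d₁ d₂ g γ₁ γ₂ hd₁ hd₂ hg hγ₂
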